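/- arXiv:1106.4989 — 4 statements merged into one kernel-verified Lean document; each statement's English description precedes it below -/
import Mathlib

section
/- The theoretical prediction function f* defined by f*(x) = 1 if p(x) > P(Y=1) and f*(x) = -1 otherwise (for x with P(X=x) > 0; the value of f* at x with P(X=x) = 0 is irrelevant) minimizes the balanced prediction error with the standard penalty: for every theoretical prediction function f : 𝒳 → {-1,1}, one has Err(f*) ≤ Err(f). -/
open MeasureTheory

/-- The theoretical prediction function `f*` defined by `f*(x) = 1` if
`p(x) > P(Y=1)` and `f*(x) = -1` otherwise (for `x` with `P(X=x) > 0`; the value of `f*`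
at `x` with `P(X=x) = 0` is irrelevant) minimizes the balanced prediction error with the
standard penalty: for every theoretical prediction function `f`, `Err(f*) ≤ Err(f)`. -/
theorem stmt_3 {Ω : Type*} [MeasurableSpace Ω] (μ : Measure Ω) [IsProbabilityMeasure μ]
    {n : ℕ} (hn : 0 < n)
    (X : Ω → (Fin n → Fin 3)) (Y : Ω → ℝ)
    (hX : Measurable X) (hY : Measurable Y)
    (hYval : ∀ ω, Y ω = 1 ∨ Y ω = -1)
    (hY1 : 0 < μ {ω | Y ω = 1}) (hY1' : μ {ω | Y ω = 1} < 1)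
    -- the conditional probability of disease p(x) = P(Y=1 | X=x)
    (p : (Fin n → Fin 3) → ℝ)
    (hp : ∀ x, p x = (μ {ω | Y ω = 1 ∧ X ω = x}).toReal / (μ {ω | X ω = x}).toReal)
    -- the optimal theoretical prediction function f*
    (fstar : (Fin n → Fin 3) → ℝ) (hfstarval : ∀ x, fstar x = 1 ∨ fstar x = -1)
    (hfstar : ∀ x, μ {ω | X ω = x} ≠ 0 →
      fstar x = if p x > (μ {ω | Y ω = 1}).toReal then 1 else -1) :
    ∀ f : (Fin n → Fin 3) → ℝ, (∀ x, f x = 1 ∨ f x = -1) →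
      ∫ ω, |Y ω - fstar (X ω)| * (1 / (4 * (μ {ω' | Y ω' = Y ω}).toReal)) ∂μ
        ≤ ∫ ω, |Y ω - f (X ω)| * (1 / (4 * (μ {ω' | Y ω' = Y ω}).toReal)) ∂μ := by
  classical
  intro f hf
  -- measurability of basic sets
  have hmeas : ∀ (x : Fin n → Fin 3) (y : ℝ), MeasurableSet {ω | X ω = x ∧ Y ω = y} := by
    intro x y
    exact (hX (measurableSet_singleton x)).inter (hY (measurableSet_singleton y))
  have hmY1 : MeasurableSet {ω | Y ω = 1} := hY (measurableSet_singleton 1)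
  -- q and q'
  have hYcompl : {ω | Y ω = -1} = {ω | Y ω = 1}ᶜ := by
    ext ω
    rcases hYval ω with h | h <;> simp [h] <;> norm_num
  have hq'val : (μ {ω | Y ω = -1}).toReal = 1 - (μ {ω | Y ω = 1}).toReal := by
    rw [hYcompl, measure_compl hmY1 (measure_ne_top μ _), measure_univ,
      ENNReal.toReal_sub_of_le prob_le_one (by norm_num)]
    simp
  have hqpos : 0 < (μ {ω | Y ω = 1}).toReal :=
    ENNReal.toReal_pos hY1.ne' (measure_ne_top μ _)
  have hq'pos : 0 < (μ {ω | Y ω = -1}).toReal := by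
    rw [hq'val]
    have : (μ {ω | Y ω = 1}).toReal < 1 := by
      simpa using (ENNReal.toReal_lt_toReal (measure_ne_top μ _) ENNReal.one_ne_top).mpr hY1'
    linarith
  -- the key decomposition of the error integral
  have key : ∀ g : (Fin n → Fin 3) → ℝ,
      ∫ ω, |Y ω - g (X ω)| * (1 / (4 * (μ {ω' | Y ω' = Y ω}).toReal)) ∂μ
        = ∑ x : (Fin n → Fin 3),
            (|1 - g x| * (1 / (4 * (μ {ω | Y ω = 1}).toReal))
                * (μ {ω | X ω = x ∧ Y ω = 1}).toReal
              + |(-1) - g x| * (1 / (4 * (μ {ω | Y ω = -1}).toReal))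
                * (μ {ω | X ω = x ∧ Y ω = (-1)}).toReal) := by
    intro g
    have hpt : ∀ ω, |Y ω - g (X ω)| * (1 / (4 * (μ {ω' | Y ω' = Y ω}).toReal))
        = ∑ x : (Fin n → Fin 3),
            (Set.indicator {ω | X ω = x ∧ Y ω = 1}
                (fun _ => |1 - g x| * (1 / (4 * (μ {ω | Y ω = 1}).toReal))) ω
              + Set.indicator {ω | X ω = x ∧ Y ω = (-1)}
                (fun _ => |(-1) - g x| * (1 / (4 * (μ {ω | Y ω = -1}).toReal))) ω) := by
      intro ω
      rw [Finset.sum_eq_single (X ω)]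
      · rcases hYval ω with hy | hy
        · have h1 : {ω' | Y ω' = Y ω} = {ω | Y ω = 1} := by
            ext ω'; simp [hy]
          rw [h1, Set.indicator_of_mem (show ω ∈ {ω' | X ω' = X ω ∧ Y ω' = 1} from ⟨rfl, hy⟩),
            Set.indicator_of_notMem (by norm_num [hy] : ω ∉ {ω' | X ω' = X ω ∧ Y ω' = (-1)})]
          rw [hy]; ring
        · have h1 : {ω' | Y ω' = Y ω} = {ω | Y ω = -1} := by
            ext ω'; simp [hy]
          rw [h1, Set.indicator_of_mem (show ω ∈ {ω' | X ω' = X ω ∧ Y ω' = (-1)} from ⟨rfl, hy⟩),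
            Set.indicator_of_notMem (by norm_num [hy] : ω ∉ {ω' | X ω' = X ω ∧ Y ω' = 1})]
          rw [hy]; ring
      · intro x _ hx
        rw [Set.indicator_of_notMem (fun hmem => hx hmem.1.symm),
          Set.indicator_of_notMem (fun hmem => hx hmem.1.symm)]
        ring
      · intro h; exact absurd (Finset.mem_univ _) h
    simp only [hpt]
    have hstep : ∫ ω, ∑ x : (Fin n → Fin 3),
        (Set.indicator {ω | X ω = x ∧ Y ω = 1}
            (fun _ => |1 - g x| * (1 / (4 * (μ {ω | Y ω = 1}).toReal))) ω
          + Set.indicator {ω | X ω = x ∧ Y ω = (-1)}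
            (fun _ => |(-1) - g x| * (1 / (4 * (μ {ω | Y ω = -1}).toReal))) ω) ∂μ
        = ∑ x : (Fin n → Fin 3), ∫ ω,
            (Set.indicator {ω | X ω = x ∧ Y ω = 1}
              (fun _ => |1 - g x| * (1 / (4 * (μ {ω | Y ω = 1}).toReal))) ω
            + Set.indicator {ω | X ω = x ∧ Y ω = (-1)}
              (fun _ => |(-1) - g x| * (1 / (4 * (μ {ω | Y ω = -1}).toReal))) ω) ∂μ :=
      integral_finset_sum _ (fun x _ =>
        ((integrable_const _).indicator (hmeas x 1)).add
          ((integrable_const _).indicator (hmeas x (-1))))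
    rw [hstep]
    refine Finset.sum_congr rfl fun x _ => ?_
    rw [integral_add ((integrable_const _).indicator (hmeas x 1))
        ((integrable_const _).indicator (hmeas x (-1))),
      integral_indicator_const _ (hmeas x 1), integral_indicator_const _ (hmeas x (-1)),
      smul_eq_mul, smul_eq_mul]
    simp only [measureReal_def]
    ring
  rw [key fstar, key f]
  apply Finset.sum_le_sum
  intro x _
  set q := (μ {ω | Y ω = 1}).toReal with hqdef
  set q' := (μ {ω | Y ω = -1}).toReal with hq'def
  set m1 := (μ {ω | X ω = x ∧ Y ω = 1}).toReal with hm1def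
  set m2 := (μ {ω | X ω = x ∧ Y ω = (-1)}).toReal with hm2def
  have hm1nonneg : 0 ≤ m1 := ENNReal.toReal_nonneg
  have hm2nonneg : 0 ≤ m2 := ENNReal.toReal_nonneg
  by_cases hx : μ {ω | X ω = x} = 0
  · have h1 : m1 = 0 := by
      rw [hm1def, measure_mono_null (fun ω h => h.1) hx]; simp
    have h2 : m2 = 0 := by
      rw [hm2def, measure_mono_null (fun ω h => h.1) hx]; simp
    rw [h1, h2]; simp
  · -- positive case: use structure of fstar
    have hunion : {ω | X ω = x} = {ω | X ω = x ∧ Y ω = 1} ∪ {ω | X ω = x ∧ Y ω = (-1)} := by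
      ext ω
      rcases hYval ω with h | h <;> simp [h] <;> norm_num
    have hdisj : Disjoint {ω | X ω = x ∧ Y ω = 1} {ω | X ω = x ∧ Y ω = (-1)} := by
      rw [Set.disjoint_left]
      rintro ω ⟨-, h1⟩ ⟨-, h2⟩
      rw [h1] at h2; norm_num at h2
    have hmx : (μ {ω | X ω = x}).toReal = m1 + m2 := by
      rw [hunion, measure_union hdisj (hmeas x (-1)),
        ENNReal.toReal_add (measure_ne_top μ _) (measure_ne_top μ _)]
    have hmxpos : 0 < m1 + m2 := by
      rw [← hmx]
      exact ENNReal.toReal_pos hx (measure_ne_top μ _)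
    have hswap : {ω | Y ω = 1 ∧ X ω = x} = {ω | X ω = x ∧ Y ω = 1} := by
      ext ω; exact and_comm
    have hpx : p x = m1 / (m1 + m2) := by
      rw [hp x, hswap, ← hm1def, hmx]
    have hfx := hfstar x hx
    have hq'1 : q' = 1 - q := hq'val
    by_cases hcond : p x > q
    · rw [hfx, if_pos hcond]
      have hm1big : q * (m1 + m2) < m1 := by
        rw [hpx] at hcond
        exact (lt_div_iff₀ hmxpos).mp hcond
      have hI : m2 * q ≤ m1 * q' := by nlinarith
      rcases hf x with h | h
      · rw [h]
      · rw [h]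
        have e1 : |1 - (1:ℝ)| * (1 / (4 * q)) * m1 + |(-1) - (1:ℝ)| * (1 / (4 * q')) * m2
            = m2 * q * (1 / (2 * (q * q'))) := by
          rw [show |1 - (1:ℝ)| = 0 by norm_num, show |(-1) - (1:ℝ)| = 2 by norm_num]
          field_simp
          ring
        have e2 : |1 - (-1:ℝ)| * (1 / (4 * q)) * m1 + |(-1) - (-1:ℝ)| * (1 / (4 * q')) * m2
            = m1 * q' * (1 / (2 * (q * q'))) := by
          rw [show |1 - (-1:ℝ)| = 2 by norm_num, show |(-1) - (-1:ℝ)| = 0 by norm_num]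
          field_simp
          ring
        rw [e1, e2]
        exact mul_le_mul_of_nonneg_right hI (by positivity)
    · rw [hfx, if_neg hcond]
      push_neg at hcond
      have hm1small : m1 ≤ q * (m1 + m2) := by
        rw [hpx] at hcond
        exact (div_le_iff₀ hmxpos).mp hcond
      have hI : m1 * q' ≤ m2 * q := by nlinarith
      rcases hf x with h | h
      · rw [h]
        have e1 : |1 - (-1:ℝ)| * (1 / (4 * q)) * m1 + |(-1) - (-1:ℝ)| * (1 / (4 * q')) * m2
            = m1 * q' * (1 / (2 * (q * q'))) := by
          rw [show |1 - (-1:ℝ)| = 2 by norm_num, show |(-1) - (-1:ℝ)| = 0 by norm_num]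
          field_simp
          ring
        have e2 : |1 - (1:ℝ)| * (1 / (4 * q)) * m1 + |(-1) - (1:ℝ)| * (1 / (4 * q')) * m2
            = m2 * q * (1 / (2 * (q * q'))) := by
          rw [show |1 - (1:ℝ)| = 0 by norm_num, show |(-1) - (1:ℝ)| = 2 by norm_num]
          field_simp
          ring
        rw [e1, e2]
        exact mul_le_mul_of_nonneg_right hI (by positivity)
      · rw [h]
end

section
/- Suppose there is a set of indices K = {k₁*, …, k_l*} ⊆ {1, …, n} such that for every x ∈ 𝒳 with P(X=x) > 0 one has p(x) = P(Y=1 | X_{k} = x_{k} for all k ∈ K). Then the function f_K, defined by f_K(x) = 1 if P(Y=1 | X_k = x_k for all k ∈ K) > P(Y=1) and f_K(x) = -1 otherwise, minimizes the balanced prediction error with the standard penalty: Err(f_K) ≤ Err(f) for every theoretical prediction function f : 𝒳 → {-1,1}. -/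
open MeasureTheory

lemma err_sum_aux {Ω : Type*} [MeasurableSpace Ω] (μ : Measure Ω) [IsProbabilityMeasure μ]
    {n : ℕ} (X : Ω → (Fin n → Fin 3)) (Y : Ω → ℝ)
    (hX : Measurable X) (hY : Measurable Y)
    (hYval : ∀ ω, Y ω = 1 ∨ Y ω = -1) (f : (Fin n → Fin 3) → ℝ) :
    ∫ ω, |Y ω - f (X ω)| * (1 / (4 * (μ {ω' | Y ω' = Y ω}).toReal)) ∂μ
      = ∑ x : Fin n → Fin 3,
        ((μ {ω | Y ω = 1 ∧ X ω = x}).toReal *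
            (|1 - f x| * (1 / (4 * (μ {ω | Y ω = 1}).toReal)))
          + (μ {ω | Y ω = -1 ∧ X ω = x}).toReal *
            (|(-1) - f x| * (1 / (4 * (μ {ω | Y ω = -1}).toReal)))) := by
  have hm1 : ∀ x : Fin n → Fin 3, MeasurableSet {ω | Y ω = 1 ∧ X ω = x} := fun x =>
    (hY (measurableSet_singleton 1)).inter (hX (measurableSet_singleton x))
  have hm2 : ∀ x : Fin n → Fin 3, MeasurableSet {ω | Y ω = -1 ∧ X ω = x} := fun x =>
    (hY (measurableSet_singleton (-1))).inter (hX (measurableSet_singleton x))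
  have hfun : (fun ω => |Y ω - f (X ω)| * (1 / (4 * (μ {ω' | Y ω' = Y ω}).toReal)))
      = fun ω => ∑ x : Fin n → Fin 3,
        (Set.indicator {ω | Y ω = 1 ∧ X ω = x}
            (fun _ => |1 - f x| * (1 / (4 * (μ {ω | Y ω = 1}).toReal))) ω
          + Set.indicator {ω | Y ω = -1 ∧ X ω = x}
            (fun _ => |(-1) - f x| * (1 / (4 * (μ {ω | Y ω = -1}).toReal))) ω) := by
    funext ω
    rw [Finset.sum_eq_single_of_mem (X ω) (Finset.mem_univ _)]
    · rcases hYval ω with hy | hy <;>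
        · simp only [Set.indicator_apply, Set.mem_setOf_eq, hy]
          norm_num
    · intro x _ hx
      have hxx : X ω ≠ x := fun h => hx h.symm
      simp [Set.indicator_apply, hxx]
  rw [hfun]
  rw [integral_finset_sum Finset.univ (f := fun (x : Fin n → Fin 3) ω =>
      Set.indicator {ω | Y ω = 1 ∧ X ω = x}
        (fun _ => |1 - f x| * (1 / (4 * (μ {ω | Y ω = 1}).toReal))) ω
      + Set.indicator {ω | Y ω = -1 ∧ X ω = x}
        (fun _ => |(-1) - f x| * (1 / (4 * (μ {ω | Y ω = -1}).toReal))) ω)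
    (fun x _ => Integrable.add ((integrable_const _).indicator (hm1 x))
      ((integrable_const _).indicator (hm2 x)))]
  refine Finset.sum_congr rfl fun x _ => ?_
  rw [integral_add ((integrable_const _).indicator (hm1 x))
      ((integrable_const _).indicator (hm2 x)),
    integral_indicator_const _ (hm1 x), integral_indicator_const _ (hm2 x),
    smul_eq_mul, smul_eq_mul]
  rfl

lemma point_ineq_aux {a b m π π' u v : ℝ} (ha : 0 ≤ a) (hb : 0 ≤ b) (hπ : 0 < π)
    (hπ' : 0 < π') (hsum : π + π' = 1) (hm : 0 < m) (hab : a + b = m)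
    (hu : u = if a / m > π then (1 : ℝ) else -1) (hv : v = 1 ∨ v = -1) :
    a * (|1 - u| * (1 / (4 * π))) + b * (|(-1) - u| * (1 / (4 * π')))
      ≤ a * (|1 - v| * (1 / (4 * π))) + b * (|(-1) - v| * (1 / (4 * π'))) := by
  split_ifs at hu with hc
  · have key : b * π ≤ a * π' := by
      have h1 : π * m < a := (lt_div_iff₀ hm).mp hc
      nlinarith
    rcases hv with rfl | rfl
    · rw [hu]
    · rw [hu]
      have e1 : |1 - (1:ℝ)| = 0 := by norm_num
      have e2 : |(-1:ℝ) - 1| = 2 := by norm_num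
      have e3 : |1 - (-1:ℝ)| = 2 := by norm_num
      have e4 : |(-1:ℝ) - (-1:ℝ)| = 0 := by norm_num
      rw [e1, e2, e3, e4]
      have h2 : b * (2 * (1 / (4 * π'))) = b / (2 * π') := by
        field_simp; ring
      have h3 : a * (2 * (1 / (4 * π))) = a / (2 * π) := by
        field_simp; ring
      have h4 : b / (2 * π') ≤ a / (2 * π) := by
        rw [div_le_div_iff₀ (by positivity) (by positivity)]; nlinarith
      calc a * (0 * (1 / (4 * π))) + b * (2 * (1 / (4 * π')))
          = b / (2 * π') := by rw [h2]; ring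
        _ ≤ a / (2 * π) := h4
        _ = a * (2 * (1 / (4 * π))) + b * (0 * (1 / (4 * π'))) := by rw [← h3]; ring
  · push_neg at hc
    have key : a * π' ≤ b * π := by
      have h1 : a ≤ π * m := (div_le_iff₀ hm).mp hc
      nlinarith
    rcases hv with rfl | rfl
    · rw [hu]
      have e1 : |1 - (1:ℝ)| = 0 := by norm_num
      have e2 : |(-1:ℝ) - 1| = 2 := by norm_num
      have e3 : |1 - (-1:ℝ)| = 2 := by norm_num
      have e4 : |(-1:ℝ) - (-1:ℝ)| = 0 := by norm_num
      rw [e1, e2, e3, e4]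
      have h2 : b * (2 * (1 / (4 * π'))) = b / (2 * π') := by
        field_simp; ring
      have h3 : a * (2 * (1 / (4 * π))) = a / (2 * π) := by
        field_simp; ring
      have h4 : a / (2 * π) ≤ b / (2 * π') := by
        rw [div_le_div_iff₀ (by positivity) (by positivity)]; nlinarith
      calc a * (2 * (1 / (4 * π))) + b * (0 * (1 / (4 * π')))
          = a / (2 * π) := by rw [← h3]; ring
        _ ≤ b / (2 * π') := h4
        _ = a * (0 * (1 / (4 * π))) + b * (2 * (1 / (4 * π'))) := by rw [h2]; ring
    · rw [hu]

/-- Suppose there is a set of indices `K ⊆ {1,…,n}` such that for every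
`x ∈ 𝒳` with `P(X=x) > 0` one has `p(x) = P(Y=1 | X_k = x_k for all k ∈ K)`. Then the
function `f_K`, defined by `f_K(x) = 1` if `P(Y=1 | X_k = x_k, k ∈ K) > P(Y=1)` and
`f_K(x) = -1` otherwise, minimizes the balanced prediction error with the standard
penalty: `Err(f_K) ≤ Err(f)` for every theoretical prediction function `f`. -/
theorem stmt_7 {Ω : Type*} [MeasurableSpace Ω] (μ : Measure Ω) [IsProbabilityMeasure μ]
    {n : ℕ} (hn : 0 < n)
    (X : Ω → (Fin n → Fin 3)) (Y : Ω → ℝ)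
    (hX : Measurable X) (hY : Measurable Y)
    (hYval : ∀ ω, Y ω = 1 ∨ Y ω = -1)
    (hY1 : 0 < μ {ω | Y ω = 1}) (hY1' : μ {ω | Y ω = 1} < 1)
    -- the conditional probability of disease p(x) = P(Y=1 | X=x)
    (p : (Fin n → Fin 3) → ℝ)
    (hp : ∀ x, p x = (μ {ω | Y ω = 1 ∧ X ω = x}).toReal / (μ {ω | X ω = x}).toReal)
    -- the set of indices K
    (K : Finset (Fin n))
    -- p(x) depends only on the coordinates in K :
    -- p(x) = P(Y=1 | X_k = x_k for all k ∈ K) whenever P(X=x) > 0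
    (hpK : ∀ x : Fin n → Fin 3, μ {ω | X ω = x} ≠ 0 →
      p x = (μ {ω | Y ω = 1 ∧ ∀ k ∈ K, X ω k = x k}).toReal
              / (μ {ω | ∀ k ∈ K, X ω k = x k}).toReal)
    -- the prediction function f_K built on the index set K
    (fK : (Fin n → Fin 3) → ℝ) (hfKval : ∀ x, fK x = 1 ∨ fK x = -1)
    (hfK : ∀ x : Fin n → Fin 3, μ {ω | ∀ k ∈ K, X ω k = x k} ≠ 0 →
      fK x = if (μ {ω | Y ω = 1 ∧ ∀ k ∈ K, X ω k = x k}).toReal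
                  / (μ {ω | ∀ k ∈ K, X ω k = x k}).toReal
                > (μ {ω | Y ω = 1}).toReal then 1 else -1) :
    ∀ f : (Fin n → Fin 3) → ℝ, (∀ x, f x = 1 ∨ f x = -1) →
      ∫ ω, |Y ω - fK (X ω)| * (1 / (4 * (μ {ω' | Y ω' = Y ω}).toReal)) ∂μ
        ≤ ∫ ω, |Y ω - f (X ω)| * (1 / (4 * (μ {ω' | Y ω' = Y ω}).toReal)) ∂μ := by
  intro f hf
  rw [err_sum_aux μ X Y hX hY hYval fK, err_sum_aux μ X Y hX hY hYval f]
  have hmY : MeasurableSet {ω | Y ω = 1} := hY (measurableSet_singleton 1)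
  have hcompl : {ω | Y ω = -1} = {ω | Y ω = 1}ᶜ := by
    ext ω
    exact ⟨fun h h1 => absurd ((h : Y ω = -1).symm.trans h1) (by norm_num),
      fun h => (hYval ω).resolve_left h⟩
  have h1 : μ {ω | Y ω = 1} + μ {ω | Y ω = -1} = 1 := by
    rw [hcompl, measure_add_measure_compl hmY, measure_univ]
  have hπpos : 0 < (μ {ω | Y ω = 1}).toReal :=
    ENNReal.toReal_pos hY1.ne' (measure_ne_top μ _)
  have hπ'pos : 0 < (μ {ω | Y ω = -1}).toReal :=
    ENNReal.toReal_pos (fun h0 => by rw [h0, add_zero] at h1; exact hY1'.ne h1)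
      (measure_ne_top μ _)
  have hsum1 : (μ {ω | Y ω = 1}).toReal + (μ {ω | Y ω = -1}).toReal = 1 := by
    rw [← ENNReal.toReal_add (measure_ne_top μ _) (measure_ne_top μ _), h1, ENNReal.toReal_one]
  apply Finset.sum_le_sum
  intro x _
  by_cases hx : μ {ω | X ω = x} = 0
  · have hA : μ {ω | Y ω = 1 ∧ X ω = x} = 0 :=
      le_antisymm (le_trans (measure_mono fun ω h => h.2) hx.le) (zero_le)
    have hB : μ {ω | Y ω = -1 ∧ X ω = x} = 0 :=
      le_antisymm (le_trans (measure_mono fun ω h => h.2) hx.le) (zero_le)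
    simp [hA, hB]
  · -- positive-probability case
    have hU : {ω | X ω = x} = {ω | Y ω = 1 ∧ X ω = x} ∪ {ω | Y ω = -1 ∧ X ω = x} := by
      ext ω
      constructor
      · intro h
        rcases hYval ω with hy | hy
        · exact Or.inl ⟨hy, h⟩
        · exact Or.inr ⟨hy, h⟩
      · rintro (⟨_, h⟩ | ⟨_, h⟩) <;> exact h
    have hd : Disjoint {ω | Y ω = 1 ∧ X ω = x} {ω | Y ω = -1 ∧ X ω = x} := by
      rw [Set.disjoint_left]
      rintro ω ⟨h1', _⟩ ⟨h2', _⟩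
      rw [h1'] at h2'
      norm_num at h2'
    have hm2x : MeasurableSet {ω | Y ω = -1 ∧ X ω = x} :=
      (hY (measurableSet_singleton (-1))).inter (hX (measurableSet_singleton x))
    have hsplit : μ {ω | X ω = x} = μ {ω | Y ω = 1 ∧ X ω = x} + μ {ω | Y ω = -1 ∧ X ω = x} := by
      rw [hU, measure_union hd hm2x]
    have hab : (μ {ω | Y ω = 1 ∧ X ω = x}).toReal + (μ {ω | Y ω = -1 ∧ X ω = x}).toReal
        = (μ {ω | X ω = x}).toReal := by
      rw [hsplit, ENNReal.toReal_add (measure_ne_top μ _) (measure_ne_top μ _)]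
    have hmpos : 0 < (μ {ω | X ω = x}).toReal :=
      ENNReal.toReal_pos hx (measure_ne_top μ _)
    have hKsub : {ω | X ω = x} ⊆ {ω | ∀ k ∈ K, X ω k = x k} :=
      fun ω h k _ => by rw [(h : X ω = x)]
    have hKne : μ {ω | ∀ k ∈ K, X ω k = x k} ≠ 0 :=
      fun h0 => hx (le_antisymm ((measure_mono hKsub).trans h0.le) (zero_le))
    have hratio : (μ {ω | Y ω = 1 ∧ ∀ k ∈ K, X ω k = x k}).toReal
        / (μ {ω | ∀ k ∈ K, X ω k = x k}).toReal
        = (μ {ω | Y ω = 1 ∧ X ω = x}).toReal / (μ {ω | X ω = x}).toReal := by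
      rw [← hpK x hx, hp x]
    have hq : fK x = if (μ {ω | Y ω = 1 ∧ X ω = x}).toReal / (μ {ω | X ω = x}).toReal
        > (μ {ω | Y ω = 1}).toReal then (1:ℝ) else -1 := by
      rw [hfK x hKne, hratio]
    exact point_ineq_aux ENNReal.toReal_nonneg ENNReal.toReal_nonneg hπpos hπ'pos hsum1
      hmpos hab hq (hf x)
end

section
/- Suppose there is a set of indices K = {k₁*, …, k_l*} ⊆ {1, …, n} such that for every x ∈ 𝒳 with P(X=x) > 0 one has p(x) = P(Y=1 | X_{k} = x_{k} for all k ∈ K). For any set of pairwise different indices J = {k₁, …, k_r} ⊆ {1, …, n}, define f_J(x) = 1 if P(Y=1 | X_k = x_k for all k ∈ J) > P(Y=1) and f_J(x) = -1 otherwise. Then Err(f_K) ≤ Err(f_J), where Err is the balanced prediction error with the standard penalty. -/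
open MeasureTheory

lemma err_sum {Ω : Type*} [MeasurableSpace Ω] (μ : Measure Ω) [IsProbabilityMeasure μ]
    {n : ℕ} (X : Ω → (Fin n → Fin 3)) (Y : Ω → ℝ)
    (hX : Measurable X) (hY : Measurable Y)
    (hYval : ∀ ω, Y ω = 1 ∨ Y ω = -1)
    (f : (Fin n → Fin 3) → ℝ) :
    ∫ ω, |Y ω - f (X ω)| * (1 / (4 * (μ {ω' | Y ω' = Y ω}).toReal)) ∂μ
      = ∑ x : Fin n → Fin 3,
          ((μ {ω | Y ω = 1 ∧ X ω = x}).toReal * (|1 - f x| * (1 / (4 * (μ {ω | Y ω = (1:ℝ)}).toReal)))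
           + (μ {ω | Y ω = -1 ∧ X ω = x}).toReal * (|(-1) - f x| * (1 / (4 * (μ {ω | Y ω = (-1:ℝ)}).toReal)))) := by
  classical
  have hSm : ∀ (x : Fin n → Fin 3) (y : ℝ), MeasurableSet {ω | Y ω = y ∧ X ω = x} := by
    intro x y
    exact (hY (measurableSet_singleton y)).inter (hX (measurableSet_singleton x))
  have hpt : ∀ ω, |Y ω - f (X ω)| * (1 / (4 * (μ {ω' | Y ω' = Y ω}).toReal))
      = ∑ x : Fin n → Fin 3,
          (({ω | Y ω = 1 ∧ X ω = x}).indicator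
              (fun _ => |1 - f x| * (1 / (4 * (μ {ω | Y ω = (1:ℝ)}).toReal))) ω
           + ({ω | Y ω = -1 ∧ X ω = x}).indicator
              (fun _ => |(-1) - f x| * (1 / (4 * (μ {ω | Y ω = (-1:ℝ)}).toReal))) ω) := by
    intro ω
    rw [Finset.sum_eq_single_of_mem (X ω) (Finset.mem_univ _)]
    · rcases hYval ω with h | h
      · have hmem : ω ∈ {ω' | Y ω' = (1:ℝ) ∧ X ω' = X ω} := ⟨h, rfl⟩
        have hnm : ω ∉ {ω' | Y ω' = (-1:ℝ) ∧ X ω' = X ω} := fun hmem => by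
          have := hmem.1; rw [h] at this; norm_num at this
        rw [Set.indicator_of_mem hmem, Set.indicator_of_notMem hnm, h]; ring
      · have hmem : ω ∈ {ω' | Y ω' = (-1:ℝ) ∧ X ω' = X ω} := ⟨h, rfl⟩
        have hnm : ω ∉ {ω' | Y ω' = (1:ℝ) ∧ X ω' = X ω} := fun hmem => by
          have := hmem.1; rw [h] at this; norm_num at this
        rw [Set.indicator_of_notMem hnm, Set.indicator_of_mem hmem, h]; ring
    · intro x _ hx
      rw [Set.indicator_of_notMem (fun hmem => hx hmem.2.symm),
          Set.indicator_of_notMem (fun hmem => hx hmem.2.symm)]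
      ring
  rw [show (fun ω => |Y ω - f (X ω)| * (1 / (4 * (μ {ω' | Y ω' = Y ω}).toReal)))
      = fun ω => ∑ x : Fin n → Fin 3,
          (({ω | Y ω = 1 ∧ X ω = x}).indicator
              (fun _ => |1 - f x| * (1 / (4 * (μ {ω | Y ω = (1:ℝ)}).toReal))) ω
           + ({ω | Y ω = -1 ∧ X ω = x}).indicator
              (fun _ => |(-1) - f x| * (1 / (4 * (μ {ω | Y ω = (-1:ℝ)}).toReal))) ω)
      from funext hpt]
  have hsum := integral_finset_sum (μ := μ) Finset.univ
    (f := fun (x : Fin n → Fin 3) (ω : Ω) =>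
      ({ω | Y ω = 1 ∧ X ω = x}).indicator
          (fun _ => |1 - f x| * (1 / (4 * (μ {ω | Y ω = (1:ℝ)}).toReal))) ω
      + ({ω | Y ω = -1 ∧ X ω = x}).indicator
          (fun _ => |(-1) - f x| * (1 / (4 * (μ {ω | Y ω = (-1:ℝ)}).toReal))) ω)
    (fun x _ => ((integrable_const _).indicator (hSm x 1)).add
      ((integrable_const _).indicator (hSm x (-1))))
  refine hsum.trans ?_
  refine Finset.sum_congr rfl fun x _ => ?_
  rw [integral_add ((integrable_const _).indicator (hSm x 1))
        ((integrable_const _).indicator (hSm x (-1))),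
      integral_indicator_const _ (hSm x 1), integral_indicator_const _ (hSm x (-1))]
  simp [smul_eq_mul, measureReal_def]

/-- Suppose there is a set of indices `K ⊆ {1,…,n}` such that for every
`x ∈ 𝒳` with `P(X=x) > 0` one has `p(x) = P(Y=1 | X_k = x_k for all k ∈ K)`. For any set
of pairwise different indices `J ⊆ {1,…,n}`, define `f_J(x) = 1` if
`P(Y=1 | X_k = x_k, k ∈ J) > P(Y=1)` and `f_J(x) = -1` otherwise. Then
`Err(f_K) ≤ Err(f_J)`, where `Err` is the balanced prediction error with the standard
penalty. -/
theorem stmt_8 {Ω : Type*} [MeasurableSpace Ω] (μ : Measure Ω) [IsProbabilityMeasure μ]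
    {n : ℕ} (hn : 0 < n)
    (X : Ω → (Fin n → Fin 3)) (Y : Ω → ℝ)
    (hX : Measurable X) (hY : Measurable Y)
    (hYval : ∀ ω, Y ω = 1 ∨ Y ω = -1)
    (hY1 : 0 < μ {ω | Y ω = 1}) (hY1' : μ {ω | Y ω = 1} < 1)
    -- the conditional probability of disease p(x) = P(Y=1 | X=x)
    (p : (Fin n → Fin 3) → ℝ)
    (hp : ∀ x, p x = (μ {ω | Y ω = 1 ∧ X ω = x}).toReal / (μ {ω | X ω = x}).toReal)
    -- the index sets K (the most significant combination) and J (any other combination)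
    (K J : Finset (Fin n))
    -- p(x) depends only on the coordinates in K
    (hpK : ∀ x : Fin n → Fin 3, μ {ω | X ω = x} ≠ 0 →
      p x = (μ {ω | Y ω = 1 ∧ ∀ k ∈ K, X ω k = x k}).toReal
              / (μ {ω | ∀ k ∈ K, X ω k = x k}).toReal)
    -- the prediction function f_K built on the index set K
    (fK : (Fin n → Fin 3) → ℝ) (hfKval : ∀ x, fK x = 1 ∨ fK x = -1)
    (hfK : ∀ x : Fin n → Fin 3, μ {ω | ∀ k ∈ K, X ω k = x k} ≠ 0 →
      fK x = if (μ {ω | Y ω = 1 ∧ ∀ k ∈ K, X ω k = x k}).toReal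
                  / (μ {ω | ∀ k ∈ K, X ω k = x k}).toReal
                > (μ {ω | Y ω = 1}).toReal then 1 else -1)
    -- the prediction function f_J built on the index set J
    (fJ : (Fin n → Fin 3) → ℝ) (hfJval : ∀ x, fJ x = 1 ∨ fJ x = -1)
    (hfJ : ∀ x : Fin n → Fin 3, μ {ω | ∀ k ∈ J, X ω k = x k} ≠ 0 →
      fJ x = if (μ {ω | Y ω = 1 ∧ ∀ k ∈ J, X ω k = x k}).toReal
                  / (μ {ω | ∀ k ∈ J, X ω k = x k}).toReal
                > (μ {ω | Y ω = 1}).toReal then 1 else -1) :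
    ∫ ω, |Y ω - fK (X ω)| * (1 / (4 * (μ {ω' | Y ω' = Y ω}).toReal)) ∂μ
      ≤ ∫ ω, |Y ω - fJ (X ω)| * (1 / (4 * (μ {ω' | Y ω' = Y ω}).toReal)) ∂μ := by
  classical
  rw [err_sum μ X Y hX hY hYval fK, err_sum μ X Y hX hY hYval fJ]
  set π1 : ℝ := (μ {ω | Y ω = (1:ℝ)}).toReal with hπ1
  set π2 : ℝ := (μ {ω | Y ω = (-1:ℝ)}).toReal with hπ2
  have hπ1pos : 0 < π1 := ENNReal.toReal_pos hY1.ne' (measure_ne_top μ _)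
  have hπ1lt : π1 < 1 := by
    rw [hπ1, ← ENNReal.toReal_one]
    exact ENNReal.toReal_strict_mono (by norm_num) hY1'
  have hsplitY : π1 + π2 = 1 := by
    have hdisj : Disjoint {ω | Y ω = (1:ℝ)} {ω | Y ω = (-1:ℝ)} := by
      rw [Set.disjoint_left]
      intro ω h1 h2
      rw [Set.mem_setOf_eq] at h1 h2
      rw [h1] at h2; norm_num at h2
    have huniv : {ω | Y ω = (1:ℝ)} ∪ {ω | Y ω = (-1:ℝ)} = Set.univ := by
      ext ω; simpa using hYval ω
    have hadd : μ {ω | Y ω = (1:ℝ)} + μ {ω | Y ω = (-1:ℝ)} = 1 := by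
      rw [← measure_union hdisj (hY (measurableSet_singleton (-1))), huniv, measure_univ]
    rw [hπ1, hπ2, ← ENNReal.toReal_add (measure_ne_top μ _) (measure_ne_top μ _), hadd,
      ENNReal.toReal_one]
  have hπ2pos : 0 < π2 := by linarith
  apply Finset.sum_le_sum
  intro x _
  set mp : ℝ := (μ {ω | Y ω = 1 ∧ X ω = x}).toReal with hmp
  set mm : ℝ := (μ {ω | Y ω = -1 ∧ X ω = x}).toReal with hmm
  by_cases hμx : μ {ω | X ω = x} = 0
  · have h1 : μ {ω | Y ω = 1 ∧ X ω = x} = 0 :=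
      measure_mono_null (fun ω h => h.2) hμx
    have h2 : μ {ω | Y ω = -1 ∧ X ω = x} = 0 :=
      measure_mono_null (fun ω h => h.2) hμx
    simp [hmp, hmm, h1, h2]
  · set m : ℝ := (μ {ω | X ω = x}).toReal with hm
    have hmpos : 0 < m := ENNReal.toReal_pos hμx (measure_ne_top μ _)
    have hmsplit : m = mp + mm := by
      have hdisj : Disjoint {ω | Y ω = (1:ℝ) ∧ X ω = x} {ω | Y ω = (-1:ℝ) ∧ X ω = x} := by
        rw [Set.disjoint_left]
        intro ω h1 h2
        have := h1.1; rw [h2.1] at this; norm_num at this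
      have huniv : {ω | Y ω = (1:ℝ) ∧ X ω = x} ∪ {ω | Y ω = (-1:ℝ) ∧ X ω = x}
          = {ω | X ω = x} := by
        ext ω
        simp only [Set.mem_union, Set.mem_setOf_eq]
        constructor
        · rintro (h | h) <;> exact h.2
        · intro h; rcases hYval ω with hy | hy
          · exact Or.inl ⟨hy, h⟩
          · exact Or.inr ⟨hy, h⟩
      have hadd : μ {ω | Y ω = (1:ℝ) ∧ X ω = x} + μ {ω | Y ω = (-1:ℝ) ∧ X ω = x}
          = μ {ω | X ω = x} := by
        rw [← measure_union hdisj
          ((hY (measurableSet_singleton (-1))).inter (hX (measurableSet_singleton x))), huniv]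
      rw [hm, hmp, hmm, ← ENNReal.toReal_add (measure_ne_top μ _) (measure_ne_top μ _), hadd]
    have hsub : {ω | X ω = x} ⊆ {ω | ∀ k ∈ K, X ω k = x k} := by
      intro ω hω k _
      rw [Set.mem_setOf_eq] at hω
      rw [hω]
    have hKne : μ {ω | ∀ k ∈ K, X ω k = x k} ≠ 0 := by
      intro h
      exact hμx (measure_mono_null hsub h)
    have hfKx : fK x = if mp / m > π1 then 1 else -1 := by
      rw [hfK x hKne, ← hpK x hμx, hp x]
    have habs1 : |(1:ℝ) - 1| = 0 := by norm_num
    have habs2 : |(-1:ℝ) - 1| = 2 := by norm_num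
    have habs3 : |(1:ℝ) - (-1)| = 2 := by norm_num
    have habs4 : |(-1:ℝ) - (-1)| = 0 := by norm_num
    have hπ2eq : π2 = 1 - π1 := by linarith
    have hmmeq : mm = m - mp := by linarith
    rcases hfJval x with hJ | hJ
    · rcases hfKval x with hK | hK
      · rw [hJ, hK]
      · -- fK = -1, fJ = 1 : need mp/(2π1) ≤ mm/(2π2)
        have hcond : ¬ (mp / m > π1) := fun hc => by
          rw [hfKx, if_pos hc] at hK; norm_num at hK
        push_neg at hcond
        have hle : mp ≤ π1 * m := by
          rw [div_le_iff₀ hmpos] at hcond; linarith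
        have key : mp * (2 * (1 / (4 * π1))) ≤ mm * (2 * (1 / (4 * π2))) := by
          rw [show (2:ℝ) * (1 / (4 * π1)) = 1 / (2 * π1) by field_simp; ring,
              show (2:ℝ) * (1 / (4 * π2)) = 1 / (2 * π2) by field_simp; ring,
              mul_one_div, mul_one_div, div_le_div_iff₀ (by positivity) (by positivity),
              hπ2eq, hmmeq]
          nlinarith [hle]
        rw [hJ, hK, habs1, habs2, habs3, habs4]
        simp only [zero_mul, mul_zero, add_zero, zero_add]
        linarith [key]
    · rcases hfKval x with hK | hK
      · -- fK = 1, fJ = -1 : need mm/(2π2) ≤ mp/(2π1)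
        have hcond : mp / m > π1 := by
          by_contra hc
          rw [hfKx, if_neg hc] at hK; norm_num at hK
        have hle : π1 * m ≤ mp := by
          rw [gt_iff_lt, lt_div_iff₀ hmpos] at hcond; linarith
        have key : mm * (2 * (1 / (4 * π2))) ≤ mp * (2 * (1 / (4 * π1))) := by
          rw [show (2:ℝ) * (1 / (4 * π1)) = 1 / (2 * π1) by field_simp; ring,
              show (2:ℝ) * (1 / (4 * π2)) = 1 / (2 * π2) by field_simp; ring,
              mul_one_div, mul_one_div, div_le_div_iff₀ (by positivity) (by positivity),
              hπ2eq, hmmeq]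
          nlinarith [hle]
        rw [hJ, hK, habs1, habs2, habs3, habs4]
        simp only [zero_mul, mul_zero, add_zero, zero_add]
        linarith [key]
      · rw [hJ, hK]
end

section
/- Fix pairwise different indices k₁, …, k_r ∈ {1, …, n}, and assume that for each x ∈ 𝒳 with P(X=x) > 0 the event {X_{k_i} = x_{k_i}, i = 1,…,r} has positive probability. Let (X^j, Y^j), j = 1, 2, …, be i.i.d. copies of (X, Y). For a nonempty subset S of {1,…,N}, let P̂_S(Y=1) = (1/#S) Σ_{j∈S} 1{Y^j = 1}, let P̂_S(Y=1 | X ∈ C) = Σ_{j∈S} 1{Y^j=1, X^j ∈ C} / Σ_{j∈S} 1{X^j ∈ C} for C ⊆ 𝒳, and define the MDR prediction algorithm f̂(x, S) = 1 if P̂_S(Y=1 | X ∈ C(x)) > P̂_S(Y=1) and f̂(x, S) = -1 otherwise, where C(x) = {u ∈ 𝒳 : u_{k_i} = x_{k_i}, i = 1,…,r}. Fix K ≥ 2 and let S_k, k = 1,…,K, be the K-fold cross-validation partition of {1,…,N} into consecutive blocks of length [N/K] (the last block extending to N), with complements S̄_k = {1,…,N} \ S_k. Define the estimated prediction error Êrr_K(N)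 = (1/2) Σ_{y ∈ {-1,1}} (1/K) Σ_{k=1}^K [ Σ_{j ∈ S_k} 1{ f̂(X^j, S̄_k) ≠ y, Y^j = y } / Σ_{j ∈ S_k} 1{Y^j = y} ]. Assume further that f(x) := 1 if P(Y=1 | X_{k_i} = x_{k_i}, i=1,…,r) > P(Y=1), f(x) := -1 otherwise, satisfies P(Y=1 | X_{k_i} = x_{k_i}, i=1,…,r) ≠ P(Y=1) for all x with P(X=x) > 0. Then Êrr_K(N) converges in probability, as N → ∞, to Err(f) = (1/2) P(f(X)=1 | Y=-1) + (1/2) P(f(X)=-1 | Y=1). -/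
open MeasureTheory ProbabilityTheory Filter Topology

section MDR

variable {Ω : Type*} [MeasurableSpace Ω] {n : ℕ}

/-- The empirical probability `P̂_S(Y = y)` over the subsample indexed by `S`. -/
noncomputable def empProbY (ξ : ℕ → Ω → (Fin n → Fin 3) × ℝ) (S : Finset ℕ)
    (y : ℝ) (ω : Ω) : ℝ :=
  (∑ j ∈ S, if (ξ j ω).2 = y then (1 : ℝ) else 0) / (S.card : ℝ)

/-- The MDR prediction algorithm `f̂(x, S)` built on the index set `J`: it predicts `1` at
`x` iff the empirical conditional probability `P̂_S(Y=1 | X ∈ C_J(x))`, where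
`C_J(x) = {u : u_k = x_k for all k ∈ J}`, exceeds the empirical probability `P̂_S(Y=1)`;
ratios with zero denominators are interpreted with the convention `a/0 = 0`. -/
noncomputable def mdrPredict (ξ : ℕ → Ω → (Fin n → Fin 3) × ℝ) (J : Finset (Fin n))
    (S : Finset ℕ) (x : Fin n → Fin 3) (ω : Ω) : ℝ :=
  if (∑ j ∈ S, if (ξ j ω).2 = 1 ∧ (∀ k ∈ J, (ξ j ω).1 k = x k) then (1 : ℝ) else 0)
        / (∑ j ∈ S, if (∀ k ∈ J, (ξ j ω).1 k = x k) then (1 : ℝ) else 0)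
      > empProbY ξ S 1 ω
  then 1 else -1

/-- The `k`-th block `S_k` (with `k = 0, …, K-1`) of the `K`-fold cross-validation
partition of the sample `{0, …, N-1}` into consecutive blocks of length `[N/K]`, the last
block extending to `N`. -/
def cvBlock (N K k : ℕ) : Finset ℕ :=
  Finset.Ico (k * (N / K)) (if k = K - 1 then N else (k + 1) * (N / K))

/-- The `K`-fold cross-validated estimated prediction error `Êrr_K` of the MDR prediction
algorithm built on the index set `J`. -/
noncomputable def cvErr (ξ : ℕ → Ω → (Fin n → Fin 3) × ℝ) (J : Finset (Fin n))
    (K N : ℕ) (ω : Ω) : ℝ :=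
  (1 / 2) * ∑ y ∈ ({-1, 1} : Finset ℝ), (1 / (K : ℝ)) * ∑ k ∈ Finset.range K,
    (∑ j ∈ cvBlock N K k,
        if mdrPredict ξ J (Finset.range N \ cvBlock N K k) (ξ j ω).1 ω ≠ y ∧ (ξ j ω).2 = y
        then (1 : ℝ) else 0)
      / (∑ j ∈ cvBlock N K k, if (ξ j ω).2 = y then (1 : ℝ) else 0)

end MDR

section Helpers

open Filter Topology MeasureTheory ProbabilityTheory

private lemma div_div_div_same (a b c : ℝ) (hc : c ≠ 0) : (a / c) / (b / c) = a / b := by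
  rcases eq_or_ne b 0 with h | h
  · simp [h]
  · field_simp

private lemma tendsto_ratio (A B : ℕ → ℝ) (α β : ℝ) (hβ : β ≠ 0)
    (hA : Tendsto (fun N => A N / N) atTop (𝓝 α))
    (hB : Tendsto (fun N => B N / N) atTop (𝓝 β)) :
    Tendsto (fun N => A N / B N) atTop (𝓝 (α / β)) := by
  refine (hA.div hB hβ).congr' ?_
  filter_upwards [eventually_ge_atTop 1] with N hN
  exact div_div_div_same (A N) (B N) N (Nat.cast_ne_zero.2 (by omega))

private lemma tendsto_natdiv (K : ℕ) (hK : 0 < K) :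
    Tendsto (fun N : ℕ => ((N / K : ℕ) : ℝ) / N) atTop (𝓝 (1 / K)) := by
  have hKR : (K : ℝ) ≠ 0 := Nat.cast_ne_zero.2 hK.ne'
  have h1 : Tendsto (fun N : ℕ => ((N % K : ℕ) : ℝ) / N) atTop (𝓝 0) := by
    have hb : Tendsto (fun N : ℕ => (K : ℝ) / N) atTop (𝓝 0) :=
      tendsto_const_nhds.div_atTop tendsto_natCast_atTop_atTop
    refine squeeze_zero (fun N => by positivity) (fun N => ?_) hb
    gcongr
    exact (Nat.mod_lt _ hK).le
  have key : ∀ᶠ N : ℕ in atTop,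
      ((N : ℝ) / N - ((N % K : ℕ) : ℝ) / N) / K = ((N / K : ℕ) : ℝ) / N := by
    filter_upwards [eventually_gt_atTop 0] with N hN
    have hNR : (N : ℝ) ≠ 0 := Nat.cast_ne_zero.2 hN.ne'
    have := Nat.div_add_mod N K
    have hcast : (K : ℝ) * ((N / K : ℕ) : ℝ) + ((N % K : ℕ) : ℝ) = (N : ℝ) := by
      exact_mod_cast congrArg (Nat.cast : ℕ → ℝ) this
    field_simp
    nlinarith [hcast, sq_nonneg ((N : ℝ))]
  have h2 : Tendsto (fun N : ℕ => ((N : ℝ) / N - ((N % K : ℕ) : ℝ) / N) / K)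
      atTop (𝓝 ((1 - 0) / K)) := by
    refine Tendsto.div_const ?_ _
    refine Tendsto.sub ?_ h1
    have : ∀ᶠ N : ℕ in atTop, (1 : ℝ) = (N : ℝ) / N := by
      filter_upwards [eventually_gt_atTop 0] with N hN
      have hNR : (N : ℝ) ≠ 0 := Nat.cast_ne_zero.2 hN.ne'
      field_simp
    exact tendsto_const_nhds.congr' this
  simpa using h2.congr' key

private lemma prefix_lim (u : ℕ → ℝ) (a : ℝ)
    (h : Tendsto (fun N => u N / N) atTop (𝓝 a)) (m : ℕ → ℕ) (c : ℝ) (hc : 0 < c)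
    (hm : Tendsto (fun N => (m N : ℝ) / N) atTop (𝓝 c)) :
    Tendsto (fun N => u (m N) / N) atTop (𝓝 (a * c)) := by
  have hmtop : Tendsto m atTop atTop := by
    rw [tendsto_atTop]
    intro b
    have h1 : ∀ᶠ N : ℕ in atTop, c / 2 ≤ (m N : ℝ) / N :=
      hm.eventually (eventually_ge_nhds (by linarith))
    filter_upwards [h1, eventually_ge_atTop (max 1 ⌈(2 * (b : ℝ)) / c⌉₊)] with N h1 h2
    have hN1 : (1 : ℕ) ≤ N := le_trans (le_max_left _ _) h2
    have hN2 : (2 * (b : ℝ)) / c ≤ N := by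
      calc (2 * (b : ℝ)) / c ≤ (⌈(2 * (b : ℝ)) / c⌉₊ : ℝ) := Nat.le_ceil _
        _ ≤ N := by exact_mod_cast le_trans (le_max_right _ _) h2
    have hNpos : (0 : ℝ) < N := by exact_mod_cast hN1
    have h3 : c / 2 * N ≤ (m N : ℝ) := (le_div_iff₀ hNpos).1 h1
    have : (b : ℝ) ≤ (m N : ℝ) := by
      have h4 : 2 * (b : ℝ) ≤ (N : ℝ) * c := (div_le_iff₀ hc).1 hN2
      nlinarith
    exact_mod_cast this
  have hev : (fun N => u (m N) / (m N) * ((m N : ℝ) / N)) =ᶠ[atTop]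
      (fun N => u (m N) / N) := by
    filter_upwards [hmtop.eventually (eventually_ge_atTop 1), eventually_ge_atTop 1] with N h1 h2
    have hmN : ((m N : ℕ) : ℝ) ≠ 0 := Nat.cast_ne_zero.2 (by omega)
    field_simp
  exact Tendsto.congr' hev ((h.comp hmtop).mul hm)

private lemma cvBlock_subset (N K k : ℕ) (hK : 0 < K) (hk : k < K) :
    cvBlock N K k ⊆ Finset.range N := by
  intro j hj
  rw [cvBlock, Finset.mem_Ico] at hj
  rw [Finset.mem_range]
  refine lt_of_lt_of_le hj.2 ?_
  split
  · exact le_rfl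
  · calc (k + 1) * (N / K) ≤ K * (N / K) := Nat.mul_le_mul_right _ (by omega)
      _ ≤ N := by rw [mul_comm]; exact Nat.div_mul_le_self N K

private lemma mul_natdiv_lim (K : ℕ) (hK : 0 < K) (r : ℕ) :
    Tendsto (fun N : ℕ => ((r * (N / K) : ℕ) : ℝ) / N) atTop (𝓝 (r / K)) := by
  have := (tendsto_natdiv K hK).const_mul (r : ℝ)
  have heq : (fun N : ℕ => (r : ℝ) * (((N / K : ℕ) : ℝ) / N)) =
      fun N : ℕ => ((r * (N / K : ℕ) : ℕ) : ℝ) / N := by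
    funext N; push_cast; ring
  rw [heq] at this
  convert this using 2
  field_simp

private lemma block_sum_lim (v : ℕ → ℝ) (a : ℝ)
    (h : Tendsto (fun N => (∑ j ∈ Finset.range N, v j) / N) atTop (𝓝 a))
    (K k : ℕ) (hK : 2 ≤ K) (hk : k < K) :
    Tendsto (fun N => (∑ j ∈ cvBlock N K k, v j) / N) atTop (𝓝 (a / K)) := by
  have hK0 : 0 < K := by omega
  have hKR : (K : ℝ) ≠ 0 := Nat.cast_ne_zero.2 hK0.ne'
  set u : ℕ → ℝ := fun N => ∑ j ∈ Finset.range N, v j with hu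
  have hab : ∀ N, k * (N / K) ≤ (if k = K - 1 then N else (k + 1) * (N / K)) := by
    intro N
    split
    · calc k * (N / K) ≤ K * (N / K) := Nat.mul_le_mul_right _ (by omega)
        _ ≤ N := by rw [mul_comm]; exact Nat.div_mul_le_self N K
    · exact Nat.mul_le_mul_right _ (by omega)
  have hsum : ∀ N, (∑ j ∈ cvBlock N K k, v j)
      = u (if k = K - 1 then N else (k + 1) * (N / K)) - u (k * (N / K)) := by
    intro N
    rw [cvBlock, Finset.sum_Ico_eq_sub _ (hab N)]
  have hb : Tendsto (fun N => u (if k = K - 1 then N else (k + 1) * (N / K)) / N)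
      atTop (𝓝 (a * ((k + 1) / K))) := by
    by_cases hkK : k = K - 1
    · simp only [hkK, if_pos rfl]
      have : ((K - 1 + 1 : ℕ) : ℝ) / K = 1 := by
        rw [show K - 1 + 1 = K by omega]; field_simp
      rw [show ((K - 1 : ℕ) : ℝ) + 1 = ((K - 1 + 1 : ℕ) : ℝ) by push_cast; ring, this, mul_one]
      exact h
    · simp only [if_neg hkK]
      have hc : (0 : ℝ) < ((k + 1) : ℝ) / K := by positivity
      have hm := mul_natdiv_lim K hK0 (k + 1)
      have hm' : Tendsto (fun N : ℕ => (((k + 1) * (N / K) : ℕ) : ℝ) / N) atTop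
          (𝓝 (((k : ℝ) + 1) / K)) := by
        convert hm using 2; push_cast; ring
      exact prefix_lim u a h (fun N => (k + 1) * (N / K)) _ hc hm'
  have ha : Tendsto (fun N => u (k * (N / K)) / N) atTop (𝓝 (a * (k / K))) := by
    rcases Nat.eq_zero_or_pos k with hk0 | hk0
    · subst hk0
      simp only [Nat.zero_mul, Nat.cast_zero, zero_div, mul_zero]
      have : u 0 = 0 := by simp [hu]
      rw [this]
      simpa using (tendsto_const_nhds : Tendsto (fun _ : ℕ => (0 : ℝ)) atTop (𝓝 0))
    · have hc : (0 : ℝ) < (k : ℝ) / K := by positivity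
      exact prefix_lim u a h _ _ hc (mul_natdiv_lim K hK0 k)
  have hBA := hb.sub ha
  have heq : (fun N => u (if k = K - 1 then N else (k + 1) * (N / K)) / N
      - u (k * (N / K)) / N) = fun N => (∑ j ∈ cvBlock N K k, v j) / N := by
    funext N
    rw [hsum N, sub_div]
  rw [heq] at hBA
  convert hBA using 2
  field_simp; ring

private lemma compl_sum_lim (v : ℕ → ℝ) (a : ℝ)
    (h : Tendsto (fun N => (∑ j ∈ Finset.range N, v j) / N) atTop (𝓝 a))
    (K k : ℕ) (hK : 2 ≤ K) (hk : k < K) :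
    Tendsto (fun N => (∑ j ∈ Finset.range N \ cvBlock N K k, v j) / N)
      atTop (𝓝 (a - a / K)) := by
  have hsub : ∀ N, (∑ j ∈ Finset.range N \ cvBlock N K k, v j)
      = (∑ j ∈ Finset.range N, v j) - (∑ j ∈ cvBlock N K k, v j) := by
    intro N
    exact Finset.sum_sdiff_eq_sub (cvBlock_subset N K k (by omega) hk)
  refine ((h.sub (block_sum_lim v a h K k hK hk)).congr fun N => ?_)
  rw [hsub N, sub_div]

private lemma lln_ind {Ω : Type*} [MeasurableSpace Ω] (μ : Measure Ω) [IsProbabilityMeasure μ]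
    {α : Type*} [MeasurableSpace α]
    (ξ : ℕ → Ω → α) (hmeas : ∀ j, Measurable (ξ j))
    (hident : ∀ j, IdentDistrib (ξ j) (ξ 0) μ μ)
    (hindep : Pairwise fun i j => IndepFun (ξ i) (ξ j) μ)
    (p : α → Prop) [DecidablePred p] (hA : MeasurableSet {z | p z}) :
    ∀ᵐ ω ∂μ, Tendsto (fun N => (∑ j ∈ Finset.range N, if p (ξ j ω) then (1 : ℝ) else 0) / N)
      atTop (𝓝 ((μ {ω | p (ξ 0 ω)}).toReal)) := by
  set g : α → ℝ := fun z => if p z then (1 : ℝ) else 0 with hgdef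
  have hg : Measurable g := Measurable.ite hA measurable_const measurable_const
  set X' : ℕ → Ω → ℝ := fun j ω => g (ξ j ω) with hX'def
  have hpre : {ω | p (ξ 0 ω)} = (ξ 0) ⁻¹' {z | p z} := rfl
  have hXind : X' 0 = Set.indicator ((ξ 0) ⁻¹' {z | p z}) (fun _ => (1 : ℝ)) := by
    funext ω
    simp [hX'def, hgdef, Set.indicator_apply, Set.mem_preimage, Set.mem_setOf_eq]
  have hint : Integrable (X' 0) μ := by
    rw [hXind]
    exact (integrable_const (1 : ℝ)).indicator ((hmeas 0) hA)
  have hindep' : Pairwise (Function.onFun (IndepFun · · μ) X') := fun i j hij =>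
    (hindep hij).comp hg hg
  have hident' : ∀ i, IdentDistrib (X' i) (X' 0) μ μ := fun i => (hident i).comp hg
  have hmean : μ[X' 0] = (μ {ω | p (ξ 0 ω)}).toReal := by
    rw [hXind, integral_indicator_const (1 : ℝ) ((hmeas 0) hA), hpre]
    simp [measureReal_def]
  have hh := strong_law_ae_real X' hint hindep' hident'
  rw [hmean] at hh
  exact hh

section Meas

variable {Ω : Type*} [MeasurableSpace Ω] {n : ℕ} (ξ : ℕ → Ω → (Fin n → Fin 3) × ℝ)

private lemma measSet_snd (hmeas : ∀ j, Measurable (ξ j)) (y : ℝ) (j : ℕ) :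
    MeasurableSet {ω | (ξ j ω).2 = y} :=
  ((measurableSet_singleton y).preimage measurable_snd).preimage (hmeas j)

private lemma measSet_cond (hmeas : ∀ j, Measurable (ξ j)) (x : Fin n → Fin 3)
    (J : Finset (Fin n)) (j : ℕ) :
    MeasurableSet {ω | ∀ k ∈ J, (ξ j ω).1 k = x k} := by
  have h1 : MeasurableSet {p : (Fin n → Fin 3) × ℝ | ∀ k ∈ J, p.1 k = x k} := by
    have : {p : (Fin n → Fin 3) × ℝ | ∀ k ∈ J, p.1 k = x k}
        = Prod.fst ⁻¹' {u : Fin n → Fin 3 | ∀ k ∈ J, u k = x k} := rfl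
    rw [this]
    exact (Set.toFinite _).measurableSet.preimage measurable_fst
  exact h1.preimage (hmeas j)

private lemma measSet_cond' (hmeas : ∀ j, Measurable (ξ j)) (x : Fin n → Fin 3)
    (J : Finset (Fin n)) (j : ℕ) :
    MeasurableSet {ω | (ξ j ω).2 = 1 ∧ ∀ k ∈ J, (ξ j ω).1 k = x k} := by
  have : {ω | (ξ j ω).2 = 1 ∧ ∀ k ∈ J, (ξ j ω).1 k = x k}
      = {ω | (ξ j ω).2 = 1} ∩ {ω | ∀ k ∈ J, (ξ j ω).1 k = x k} := rfl
  rw [this]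
  exact (measSet_snd ξ hmeas 1 j).inter (measSet_cond ξ hmeas x J j)

private lemma measurable_empProbY (hmeas : ∀ j, Measurable (ξ j)) (S : Finset ℕ) (y : ℝ) :
    Measurable (empProbY ξ S y) := by
  unfold empProbY
  refine Measurable.div_const ?_ _
  refine Finset.measurable_sum _ fun j _ => ?_
  exact Measurable.ite (measSet_snd ξ hmeas y j) measurable_const measurable_const

private lemma measurable_mdrPredict (hmeas : ∀ j, Measurable (ξ j)) (J : Finset (Fin n))
    (S : Finset ℕ) (x : Fin n → Fin 3) :
    Measurable (mdrPredict ξ J S x) := by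
  unfold mdrPredict
  refine Measurable.ite ?_ measurable_const measurable_const
  refine measurableSet_lt (measurable_empProbY ξ hmeas S 1) ?_
  refine Measurable.div ?_ ?_
  · exact Finset.measurable_sum _ fun j _ =>
      Measurable.ite (measSet_cond' ξ hmeas x J j) measurable_const measurable_const
  · exact Finset.measurable_sum _ fun j _ =>
      Measurable.ite (measSet_cond ξ hmeas x J j) measurable_const measurable_const

private lemma measurable_mdrPredict_rand (hmeas : ∀ j, Measurable (ξ j)) (J : Finset (Fin n))
    (S : Finset ℕ) (j : ℕ) :
    Measurable (fun ω => mdrPredict ξ J S ((ξ j ω).1) ω) := by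
  classical
  have heq : (fun ω => mdrPredict ξ J S ((ξ j ω).1) ω)
      = fun ω => ∑ x ∈ Finset.univ, if (ξ j ω).1 = x then mdrPredict ξ J S x ω else 0 := by
    funext ω
    rw [Finset.sum_ite_eq]
    simp
  rw [heq]
  refine Finset.measurable_sum _ fun x _ => ?_
  refine Measurable.ite ?_ (measurable_mdrPredict ξ hmeas J S x) measurable_const
  have : {a | (ξ j a).1 = x} = (ξ j) ⁻¹' (Prod.fst ⁻¹' {x}) := rfl
  rw [this]
  exact ((measurableSet_singleton x).preimage measurable_fst).preimage (hmeas j)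

private lemma measurable_cvErr (hmeas : ∀ j, Measurable (ξ j)) (J : Finset (Fin n)) (K N : ℕ) :
    Measurable (cvErr ξ J K N) := by
  unfold cvErr
  refine Measurable.const_mul ?_ _
  refine Finset.measurable_sum _ fun y _ => ?_
  refine Measurable.const_mul ?_ _
  refine Finset.measurable_sum _ fun k _ => ?_
  refine Measurable.div ?_ ?_
  · refine Finset.measurable_sum _ fun j _ => ?_
    refine Measurable.ite ?_ measurable_const measurable_const
    have : {ω | mdrPredict ξ J (Finset.range N \ cvBlock N K k) (ξ j ω).1 ω ≠ y ∧ (ξ j ω).2 = y}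
        = {ω | mdrPredict ξ J (Finset.range N \ cvBlock N K k) (ξ j ω).1 ω ≠ y}
          ∩ {ω | (ξ j ω).2 = y} := rfl
    rw [this]
    refine MeasurableSet.inter ?_ (measSet_snd ξ hmeas y j)
    exact (measurable_mdrPredict_rand ξ hmeas J (Finset.range N \ cvBlock N K k) j)
      (measurableSet_singleton y).compl
  · refine Finset.measurable_sum _ fun j _ => ?_
    exact Measurable.ite (measSet_snd ξ hmeas y j) measurable_const measurable_const

end Meas

end Helpers


/-- For fixed pairwise different indices (a set `J`), assuming the
conditioning events have positive probability and the nondegeneracy condition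
`P(Y=1 | X_k = x_k, k ∈ J) ≠ P(Y=1)` holds at every point of positive mass, the `K`-fold
cross-validated estimated prediction error of the MDR prediction algorithm built on `J`
converges in probability, as `N → ∞`, to the balanced prediction error
`Err(f) = (1/2) P(f(X)=1 | Y=-1) + (1/2) P(f(X)=-1 | Y=1)` of the theoretical MDR
prediction function `f`. -/
theorem stmt_12 {Ω : Type*} [MeasurableSpace Ω] (μ : Measure Ω) [IsProbabilityMeasure μ]
    {n : ℕ} (hn : 0 < n)
    (X : Ω → (Fin n → Fin 3)) (Y : Ω → ℝ)
    (hX : Measurable X) (hY : Measurable Y)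
    (hYval : ∀ ω, Y ω = 1 ∨ Y ω = -1)
    (hY1 : 0 < μ {ω | Y ω = 1}) (hY1' : μ {ω | Y ω = 1} < 1)
    -- the set of pairwise different indices k₁, …, k_r
    (J : Finset (Fin n))
    -- for each x of positive mass the conditioning event has positive probability
    (hpos : ∀ x : Fin n → Fin 3, μ {ω | X ω = x} ≠ 0 →
      μ {ω | ∀ k ∈ J, X ω k = x k} ≠ 0)
    -- the i.i.d. sample (X^j, Y^j), j = 0, 1, 2, …
    (ξ : ℕ → Ω → (Fin n → Fin 3) × ℝ)
    (hmeas : ∀ j, Measurable (ξ j))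
    (hident : ∀ j, IdentDistrib (ξ j) (fun ω => (X ω, Y ω)) μ μ)
    (hindep : iIndepFun ξ μ)
    -- the theoretical MDR prediction function f on the index set J
    (f : (Fin n → Fin 3) → ℝ)
    (hf : ∀ x : Fin n → Fin 3,
      f x = if (μ {ω | Y ω = 1 ∧ ∀ k ∈ J, X ω k = x k}).toReal
                / (μ {ω | ∀ k ∈ J, X ω k = x k}).toReal
              > (μ {ω | Y ω = 1}).toReal then 1 else -1)
    -- nondegeneracy: no ties between the conditional and unconditional probabilities
    (hnondeg : ∀ x : Fin n → Fin 3, μ {ω | X ω = x} ≠ 0 →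
      (μ {ω | Y ω = 1 ∧ ∀ k ∈ J, X ω k = x k}).toReal
          / (μ {ω | ∀ k ∈ J, X ω k = x k}).toReal
        ≠ (μ {ω | Y ω = 1}).toReal)
    -- the number of cross-validation folds
    (K : ℕ) (hK : 2 ≤ K) :
    TendstoInMeasure μ (fun N => cvErr ξ J K N) atTop
      (fun _ =>
        (1 / 2) * ((μ {ω | f (X ω) = 1 ∧ Y ω = -1}).toReal / (μ {ω | Y ω = -1}).toReal)
          + (1 / 2) * ((μ {ω | f (X ω) = -1 ∧ Y ω = 1}).toReal / (μ {ω | Y ω = 1}).toReal)) := by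
  classical
  have hK0 : 0 < K := by omega
  have hKR : (K : ℝ) ≠ 0 := Nat.cast_ne_zero.2 hK0.ne'
  have hK2R : (2 : ℝ) ≤ (K : ℝ) := by exact_mod_cast hK
  have hKfrac : (0 : ℝ) < 1 - 1 / K := by
    rw [sub_pos, div_lt_one (by linarith : (0:ℝ) < K)]; linarith
  have hident0 : ∀ j, IdentDistrib (ξ j) (ξ 0) μ μ := fun j => (hident j).trans (hident 0).symm
  have hpair : Pairwise fun i j => IndepFun (ξ i) (ξ j) μ := fun i j hij => hindep.indepFun hij
  have hfval : ∀ x, f x = 1 ∨ f x = -1 := by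
    intro x; rw [hf x]; split
    · exact Or.inl rfl
    · exact Or.inr rfl
  -- abbreviations for the limit constants
  set q1 : ℝ := (μ {ω | Y ω = 1}).toReal with hq1def
  set qm : ℝ := (μ {ω | Y ω = -1}).toReal with hqmdef
  set dm : ℝ := (μ {ω | f (X ω) = 1 ∧ Y ω = -1}).toReal with hdmdef
  set d1 : ℝ := (μ {ω | f (X ω) = -1 ∧ Y ω = 1}).toReal with hd1def
  have hq1pos : 0 < q1 := ENNReal.toReal_pos hY1.ne' (measure_ne_top μ _)
  have hsubm : {ω | Y ω = 1}ᶜ ⊆ {ω | Y ω = -1} := fun ω h => (hYval ω).resolve_left h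
  have hqm0 : μ {ω | Y ω = -1} ≠ 0 := by
    intro h
    have h2 : μ ({ω | Y ω = 1}ᶜ) = 0 :=
      le_antisymm (h ▸ measure_mono hsubm) (by simp)
    have hms : MeasurableSet {ω | Y ω = 1} := hY (measurableSet_singleton 1)
    rw [measure_compl hms (measure_ne_top μ _), measure_univ] at h2
    exact absurd (tsub_eq_zero_iff_le.mp h2) (not_le.2 hY1')
  have hqmpos : 0 < qm := ENNReal.toReal_pos hqm0 (measure_ne_top μ _)
  -- measurable sets in the sample space
  have hmY : ∀ y : ℝ, MeasurableSet {z : (Fin n → Fin 3) × ℝ | z.2 = y} :=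
    fun y => (measurableSet_singleton y).preimage measurable_snd
  have hmB : ∀ x : Fin n → Fin 3,
      MeasurableSet {z : (Fin n → Fin 3) × ℝ | ∀ k ∈ J, z.1 k = x k} := fun x =>
    (Set.toFinite {u : Fin n → Fin 3 | ∀ k ∈ J, u k = x k}).measurableSet.preimage
      measurable_fst
  have hmC : ∀ x : Fin n → Fin 3,
      MeasurableSet {z : (Fin n → Fin 3) × ℝ | z.2 = 1 ∧ ∀ k ∈ J, z.1 k = x k} := fun x =>
    (hmY 1).inter (hmB x)
  have hmD : ∀ y : ℝ, MeasurableSet {z : (Fin n → Fin 3) × ℝ | f z.1 ≠ y ∧ z.2 = y} :=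
    fun y =>
    ((Set.toFinite {u : Fin n → Fin 3 | f u ≠ y}).measurableSet.preimage
      measurable_fst).inter (hmY y)
  have htrans : ∀ (p : (Fin n → Fin 3) × ℝ → Prop), MeasurableSet {z | p z} →
      μ {ω | p (ξ 0 ω)} = μ {ω | p (X ω, Y ω)} := fun p hp => (hident 0).measure_mem_eq hp
  -- the almost-everywhere strong-law statements
  have L1 : ∀ᵐ ω ∂μ, Tendsto
      (fun N => (∑ j ∈ Finset.range N, if (ξ j ω).2 = (1:ℝ) then (1:ℝ) else 0) / N)
      atTop (𝓝 q1) := by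
    have h := lln_ind μ ξ hmeas hident0 hpair (fun z => z.2 = (1:ℝ)) (hmY 1)
    rw [show (μ {ω | (fun z : (Fin n → Fin 3) × ℝ => z.2 = (1:ℝ)) (ξ 0 ω)}).toReal = q1 by
      rw [htrans _ (hmY 1)]] at h
    exact h
  have Lm : ∀ᵐ ω ∂μ, Tendsto
      (fun N => (∑ j ∈ Finset.range N, if (ξ j ω).2 = (-1:ℝ) then (1:ℝ) else 0) / N)
      atTop (𝓝 qm) := by
    have h := lln_ind μ ξ hmeas hident0 hpair (fun z => z.2 = (-1:ℝ)) (hmY (-1))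
    rw [show (μ {ω | (fun z : (Fin n → Fin 3) × ℝ => z.2 = (-1:ℝ)) (ξ 0 ω)}).toReal = qm by
      rw [htrans _ (hmY (-1))]] at h
    exact h
  have LB : ∀ᵐ ω ∂μ, ∀ x : Fin n → Fin 3, Tendsto
      (fun N => (∑ j ∈ Finset.range N, if (∀ k ∈ J, (ξ j ω).1 k = x k) then (1:ℝ) else 0) / N)
      atTop (𝓝 ((μ {ω | ∀ k ∈ J, X ω k = x k}).toReal)) := by
    rw [ae_all_iff]
    intro x
    have h := lln_ind μ ξ hmeas hident0 hpair
      (fun z : (Fin n → Fin 3) × ℝ => ∀ k ∈ J, z.1 k = x k) (hmB x)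
    rw [show (μ {ω | (fun z : (Fin n → Fin 3) × ℝ => ∀ k ∈ J, z.1 k = x k) (ξ 0 ω)}).toReal
        = (μ {ω | ∀ k ∈ J, X ω k = x k}).toReal by rw [htrans _ (hmB x)]] at h
    exact h
  have LC : ∀ᵐ ω ∂μ, ∀ x : Fin n → Fin 3, Tendsto
      (fun N => (∑ j ∈ Finset.range N,
        if (ξ j ω).2 = 1 ∧ (∀ k ∈ J, (ξ j ω).1 k = x k) then (1:ℝ) else 0) / N)
      atTop (𝓝 ((μ {ω | Y ω = 1 ∧ ∀ k ∈ J, X ω k = x k}).toReal)) := by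
    rw [ae_all_iff]
    intro x
    have h := lln_ind μ ξ hmeas hident0 hpair
      (fun z : (Fin n → Fin 3) × ℝ => z.2 = 1 ∧ ∀ k ∈ J, z.1 k = x k) (hmC x)
    rw [show (μ {ω | (fun z : (Fin n → Fin 3) × ℝ =>
          z.2 = 1 ∧ ∀ k ∈ J, z.1 k = x k) (ξ 0 ω)}).toReal
        = (μ {ω | Y ω = 1 ∧ ∀ k ∈ J, X ω k = x k}).toReal by rw [htrans _ (hmC x)]] at h
    exact h
  have hDmset : {ω | f (X ω) ≠ (-1:ℝ) ∧ Y ω = -1} = {ω | f (X ω) = 1 ∧ Y ω = -1} := by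
    ext ω
    simp only [Set.mem_setOf_eq]
    constructor
    · rintro ⟨h1, h2⟩; exact ⟨(hfval (X ω)).resolve_right h1, h2⟩
    · rintro ⟨h1, h2⟩; refine ⟨?_, h2⟩; rw [h1]; norm_num
  have hD1set : {ω | f (X ω) ≠ (1:ℝ) ∧ Y ω = 1} = {ω | f (X ω) = -1 ∧ Y ω = 1} := by
    ext ω
    simp only [Set.mem_setOf_eq]
    constructor
    · rintro ⟨h1, h2⟩; exact ⟨(hfval (X ω)).resolve_left h1, h2⟩
    · rintro ⟨h1, h2⟩; refine ⟨?_, h2⟩; rw [h1]; norm_num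
  have LDm : ∀ᵐ ω ∂μ, Tendsto
      (fun N => (∑ j ∈ Finset.range N,
        if f ((ξ j ω).1) ≠ (-1:ℝ) ∧ (ξ j ω).2 = -1 then (1:ℝ) else 0) / N)
      atTop (𝓝 dm) := by
    have h := lln_ind μ ξ hmeas hident0 hpair
      (fun z : (Fin n → Fin 3) × ℝ => f z.1 ≠ (-1:ℝ) ∧ z.2 = -1) (hmD (-1))
    rw [show (μ {ω | (fun z : (Fin n → Fin 3) × ℝ =>
          f z.1 ≠ (-1:ℝ) ∧ z.2 = -1) (ξ 0 ω)}).toReal = dm by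
      rw [htrans _ (hmD (-1))]
      exact congrArg (fun s => (μ s).toReal) hDmset] at h
    exact h
  have LD1 : ∀ᵐ ω ∂μ, Tendsto
      (fun N => (∑ j ∈ Finset.range N,
        if f ((ξ j ω).1) ≠ (1:ℝ) ∧ (ξ j ω).2 = 1 then (1:ℝ) else 0) / N)
      atTop (𝓝 d1) := by
    have h := lln_ind μ ξ hmeas hident0 hpair
      (fun z : (Fin n → Fin 3) × ℝ => f z.1 ≠ (1:ℝ) ∧ z.2 = 1) (hmD 1)
    rw [show (μ {ω | (fun z : (Fin n → Fin 3) × ℝ =>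
          f z.1 ≠ (1:ℝ) ∧ z.2 = 1) (ξ 0 ω)}).toReal = d1 by
      rw [htrans _ (hmD 1)]
      exact congrArg (fun s => (μ s).toReal) hD1set] at h
    exact h
  -- almost surely each sample point has positive mass
  have hsupp : ∀ᵐ ω ∂μ, ∀ j : ℕ, μ {ω' | X ω' = (ξ j ω).1} ≠ 0 := by
    rw [ae_all_iff]
    intro j
    have hae : ∀ᵐ ω ∂μ, ∀ x : Fin n → Fin 3, μ {ω' | X ω' = x} = 0 → (ξ j ω).1 ≠ x := by
      rw [ae_all_iff]
      intro x
      by_cases hx : μ {ω' | X ω' = x} = 0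
      · have hzero : μ {ω | (ξ j ω).1 = x} = 0 := by
          have hms : MeasurableSet {z : (Fin n → Fin 3) × ℝ | z.1 = x} :=
            (measurableSet_singleton x).preimage measurable_fst
          calc μ {ω | (ξ j ω).1 = x} = μ {ω | X ω = x} := (hident j).measure_mem_eq hms
            _ = 0 := hx
        filter_upwards [measure_eq_zero_iff_ae_notMem.mp hzero] with ω hω
        intro _
        exact hω
      · filter_upwards with ω h
        exact absurd h hx
    filter_upwards [hae] with ω hω h
    exact (hω _ h) rfl
  -- reduce to almost-everywhere convergence
  refine tendstoInMeasure_of_tendsto_ae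
    (fun N => (measurable_cvErr ξ hmeas J K N).aestronglyMeasurable) ?_
  filter_upwards [L1, Lm, LB, LC, LDm, LD1, hsupp] with ω h1 hm hB hC hDm hD1 hsup
  -- deterministic counting limit
  have hone : Tendsto (fun N : ℕ => (∑ _j ∈ Finset.range N, (1:ℝ)) / N) atTop (𝓝 1) := by
    have heq : (fun _ : ℕ => (1:ℝ)) =ᶠ[atTop]
        fun N : ℕ => (∑ _j ∈ Finset.range N, (1:ℝ)) / N := by
      filter_upwards [eventually_ge_atTop 1] with N hN
      rw [Finset.sum_const, Finset.card_range, nsmul_eq_mul, mul_one,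
        div_self (Nat.cast_ne_zero.2 (by omega))]
    exact tendsto_const_nhds.congr' heq
  -- stabilization of the MDR predictor
  have hstab : ∀ᶠ N : ℕ in atTop, ∀ k ∈ Finset.range K, ∀ x : Fin n → Fin 3,
      μ {ω' | X ω' = x} ≠ 0 →
      mdrPredict ξ J (Finset.range N \ cvBlock N K k) x ω = f x := by
    rw [Filter.eventually_all_finset]
    intro k hkmem
    have hk : k < K := Finset.mem_range.1 hkmem
    refine eventually_all.2 fun x => ?_
    by_cases hx : μ {ω' | X ω' = x} = 0
    · filter_upwards with N hx'
      exact absurd hx hx'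
    · have hbx : 0 < (μ {ω' | ∀ k ∈ J, X ω' k = x k}).toReal :=
        ENNReal.toReal_pos (hpos x hx) (measure_ne_top μ _)
      have hnum := compl_sum_lim _ _ (hC x) K k hK hk
      have hden := compl_sum_lim _ _ (hB x) K k hK hk
      have hdenne : (μ {ω' | ∀ k ∈ J, X ω' k = x k}).toReal
          - (μ {ω' | ∀ k ∈ J, X ω' k = x k}).toReal / K ≠ 0 := by
        have hrw : (μ {ω' | ∀ k ∈ J, X ω' k = x k}).toReal
            - (μ {ω' | ∀ k ∈ J, X ω' k = x k}).toReal / K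
            = (μ {ω' | ∀ k ∈ J, X ω' k = x k}).toReal * (1 - 1/K) := by ring
        rw [hrw]
        exact (mul_pos hbx hKfrac).ne'
      have hratio := tendsto_ratio _ _ _ _ hdenne hnum hden
      have hval : ((μ {ω' | Y ω' = 1 ∧ ∀ k ∈ J, X ω' k = x k}).toReal
            - (μ {ω' | Y ω' = 1 ∧ ∀ k ∈ J, X ω' k = x k}).toReal / K)
          / ((μ {ω' | ∀ k ∈ J, X ω' k = x k}).toReal
            - (μ {ω' | ∀ k ∈ J, X ω' k = x k}).toReal / K)
          = (μ {ω' | Y ω' = 1 ∧ ∀ k ∈ J, X ω' k = x k}).toReal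
            / (μ {ω' | ∀ k ∈ J, X ω' k = x k}).toReal := by
        rw [show (μ {ω' | Y ω' = 1 ∧ ∀ k ∈ J, X ω' k = x k}).toReal
            - (μ {ω' | Y ω' = 1 ∧ ∀ k ∈ J, X ω' k = x k}).toReal / K
            = (μ {ω' | Y ω' = 1 ∧ ∀ k ∈ J, X ω' k = x k}).toReal * (1 - 1/K) from by ring,
          show (μ {ω' | ∀ k ∈ J, X ω' k = x k}).toReal
            - (μ {ω' | ∀ k ∈ J, X ω' k = x k}).toReal / K
            = (μ {ω' | ∀ k ∈ J, X ω' k = x k}).toReal * (1 - 1/K) from by ring,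
          mul_div_mul_right _ _ hKfrac.ne']
      rw [hval] at hratio
      -- the empirical probability of the label 1 on the complement
      have hcard : Tendsto
          (fun N => (((Finset.range N \ cvBlock N K k).card : ℝ)) / N)
          atTop (𝓝 (1 - 1/K)) := by
        have h0 := compl_sum_lim (fun _ => (1:ℝ)) 1 hone K k hK hk
        have h0' := h0.congr fun N => by
          rw [Finset.sum_const, nsmul_eq_mul, mul_one]
        simpa using h0'
      have hempnum := compl_sum_lim _ _ h1 K k hK hk
      have hemp : Tendsto (fun N => empProbY ξ (Finset.range N \ cvBlock N K k) 1 ω)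
          atTop (𝓝 q1) := by
        have h2 := tendsto_ratio _ _ _ _ hKfrac.ne' hempnum hcard
        have hv : (q1 - q1/K) / (1 - 1/K) = q1 := by
          rw [show q1 - q1/K = q1 * (1 - 1/K) from by ring, mul_div_assoc,
            div_self hKfrac.ne', mul_one]
        rw [hv] at h2
        exact h2
      rcases lt_or_gt_of_ne (hnondeg x hx) with hlt | hgt
      · rcases exists_between hlt with ⟨m, hm1, hm2⟩
        have hev1 := hratio.eventually (eventually_lt_nhds hm1)
        have hev2 := hemp.eventually (eventually_gt_nhds hm2)
        filter_upwards [hev1, hev2] with N hN1 hN2 _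
        simp only [mdrPredict]
        rw [if_neg (not_lt.2 (lt_trans hN1 hN2).le), hf x, if_neg (not_lt.2 hlt.le)]
      · rcases exists_between hgt with ⟨m, hm2, hm1⟩
        have hev1 := hratio.eventually (eventually_gt_nhds hm1)
        have hev2 := hemp.eventually (eventually_lt_nhds hm2)
        filter_upwards [hev1, hev2] with N hN1 hN2 _
        simp only [mdrPredict]
        rw [if_pos (lt_trans hN2 hN1), hf x, if_pos hgt]
  -- per-block ratios for the two labels
  have hRm : ∀ k ∈ Finset.range K, Tendsto (fun N =>
      (∑ j ∈ cvBlock N K k, if f ((ξ j ω).1) ≠ (-1:ℝ) ∧ (ξ j ω).2 = -1 then (1:ℝ) else 0)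
      / (∑ j ∈ cvBlock N K k, if (ξ j ω).2 = (-1:ℝ) then (1:ℝ) else 0))
      atTop (𝓝 (dm/qm)) := by
    intro k hkmem
    have hk : k < K := Finset.mem_range.1 hkmem
    have h2 := tendsto_ratio _ _ (dm/K) (qm/K) (div_ne_zero hqmpos.ne' hKR)
      (block_sum_lim _ _ hDm K k hK hk) (block_sum_lim _ _ hm K k hK hk)
    rwa [div_div_div_same dm qm K hKR] at h2
  have hR1 : ∀ k ∈ Finset.range K, Tendsto (fun N =>
      (∑ j ∈ cvBlock N K k, if f ((ξ j ω).1) ≠ (1:ℝ) ∧ (ξ j ω).2 = 1 then (1:ℝ) else 0)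
      / (∑ j ∈ cvBlock N K k, if (ξ j ω).2 = (1:ℝ) then (1:ℝ) else 0))
      atTop (𝓝 (d1/q1)) := by
    intro k hkmem
    have hk : k < K := Finset.mem_range.1 hkmem
    have h2 := tendsto_ratio _ _ (d1/K) (q1/K) (div_ne_zero hq1pos.ne' hKR)
      (block_sum_lim _ _ hD1 K k hK hk) (block_sum_lim _ _ h1 K k hK hk)
    rwa [div_div_div_same d1 q1 K hKR] at h2
  have hsum_m := tendsto_finset_sum (Finset.range K) hRm
  have hsum_1 := tendsto_finset_sum (Finset.range K) hR1
  have hmain := ((hsum_m.const_mul (1/(K:ℝ))).add (hsum_1.const_mul (1/(K:ℝ)))).const_mul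
    (1/2 : ℝ)
  have hval2 : (1/2 : ℝ) * ((1/(K:ℝ)) * ∑ _k ∈ Finset.range K, dm/qm
      + (1/(K:ℝ)) * ∑ _k ∈ Finset.range K, d1/q1)
      = 1/2 * (dm/qm) + 1/2 * (d1/q1) := by
    rw [Finset.sum_const, Finset.sum_const, Finset.card_range, nsmul_eq_mul, nsmul_eq_mul]
    field_simp
  rw [hval2] at hmain
  refine hmain.congr' ?_
  filter_upwards [hstab] with N hst
  symm
  simp only [cvErr]
  rw [Finset.sum_pair (show (-1:ℝ) ≠ 1 by norm_num)]
  congr 1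
  congr 1
  · congr 1
    refine Finset.sum_congr rfl fun k hk => ?_
    congr 1
    refine Finset.sum_congr rfl fun j hj => ?_
    rw [hst k hk ((ξ j ω).1) (hsup j)]
  · congr 1
    refine Finset.sum_congr rfl fun k hk => ?_
    congr 1
    refine Finset.sum_congr rfl fun j hj => ?_
    rw [hst k hk ((ξ j ω).1) (hsup j)]
end
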